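/- arXiv:2109.01838 — 3 statements merged into one kernel-verified Lean document; each statement's English description precedes it below -/
import Mathlib

section
/- A subset F ⊆ E of edges of a graph G=(V,E) is the cut δ(V_1,…,V_k) of some partition of V if and only if for every cycle C in G, F does not intersect C in exactly one edge; equivalently, the characteristic vector y of F satisfies all cycle inequalities y_e ≤ Σ_{e'∈C∖{e}} y_{e'} for every cycle C and e ∈ C. -/
/-!
A labelling `f` whose label changes exactly across the edges of `F` is constant along every
walk avoiding `F`, so a closed walk cannot cross `F` exactly once. Conversely, label each vertex
by its connected component in `G` with the edges of `F` deleted. An edge `uv ∈ F` whose ends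
stay connected there closes, with a path avoiding `F`, a cycle that meets `F` only in `uv`.
-/

namespace SimpleGraph

variable {V : Type*} {G : SimpleGraph V} {F : Set (Sym2 V)}

section Labelling

variable {α : Type*} {f : V → α}

theorem Walk.apply_eq_of_forall_edges_notMem
    (hf : ∀ u v, G.Adj u v → s(u, v) ∉ F → f u = f v) :
    ∀ {a b : V} (q : G.Walk a b), (∀ e ∈ q.edges, e ∉ F) → f a = f b
  | _, _, .nil, _ => rfl
  | _, _, .cons h q, hq =>
    (hf _ _ h (hq _ (by simp))).trans
      (apply_eq_of_forall_edges_notMem hf q fun e he => hq e (by simp [he]))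

variable [DecidablePred (· ∈ F)]

theorem Walk.length_filter_edges_ne_one
    (hf : ∀ u v, G.Adj u v → (s(u, v) ∈ F ↔ f u ≠ f v)) :
    ∀ {a b : V} (q : G.Walk a b), f a = f b → (q.edges.filter (· ∈ F)).length ≠ 1
  | _, _, .nil, _ => by simp
  | a, _, @Walk.cons _ _ _ c _ h q, hab => by
    have hf' : ∀ u v, G.Adj u v → s(u, v) ∉ F → f u = f v := fun u v huv hne =>
      not_ne_iff.mp ((hf u v huv).not.mp hne)
    by_cases hac : s(a, c) ∈ F
    · simp only [Walk.edges_cons, List.filter_cons, hac, decide_true, if_true,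
        List.length_cons, ne_eq, Nat.add_eq_right, List.length_eq_zero_iff,
        List.filter_eq_nil_iff, decide_eq_true_eq]
      intro hq
      have hcb : f c = _ := Walk.apply_eq_of_forall_edges_notMem hf' q hq
      exact (hf _ _ h).mp hac (hab.trans hcb.symm)
    · simp only [Walk.edges_cons, List.filter_cons, hac, decide_false]
      exact length_filter_edges_ne_one hf q ((hf' _ _ h hac).symm.trans hab)

end Labelling

theorem out_connectedComponentMk_eq_iff {u v : V} :
    (G.connectedComponentMk u).out = (G.connectedComponentMk v).out ↔ G.Reachable u v := by
  rw [← ConnectedComponent.eq]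
  exact ⟨fun h => (Quot.out_eq _).symm.trans ((congrArg (Quot.mk _) h).trans (Quot.out_eq _)),
    congrArg _⟩

variable [DecidablePred (· ∈ F)]

theorem exists_isCycle_length_filter_edges_eq_one {u v : V} (huv : G.Adj u v)
    (hmem : s(u, v) ∈ F) (hreach : (G.deleteEdges F).Reachable u v) :
    ∃ c : G.Walk v v, c.IsCycle ∧ (c.edges.filter (· ∈ F)).length = 1 := by
  obtain ⟨p, hp⟩ := hreach.exists_isPath
  have hpF : ∀ e ∈ p.edges, e ∉ F := fun e he => by
    have := p.edges_subset_edgeSet he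
    rw [edgeSet_deleteEdges] at this
    exact this.2
  let q : G.Walk u v := p.mapLe (G.deleteEdges_le F)
  have hq : q.edges = p.edges := Walk.edges_mapLe_eq_edges _ _
  refine ⟨.cons huv.symm q, ?_, ?_⟩
  · refine (Walk.cons_isCycle_iff _ _).mpr ⟨hp.mapLe _, ?_⟩
    rw [hq, Sym2.eq_swap]
    exact fun h => hpF _ h hmem
  · have hvu : s(v, u) ∈ F := Sym2.eq_swap ▸ hmem
    have hnil : q.edges.filter (· ∈ F) = [] := by
      simpa [hq] using hpF
    simp [hvu, hnil]

theorem mem_iff_not_reachable_deleteEdges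
    (hcyc : ∀ (v : V) (c : G.Walk v v), c.IsCycle → (c.edges.filter (· ∈ F)).length ≠ 1)
    {u v : V} (huv : G.Adj u v) :
    s(u, v) ∈ F ↔ ¬ (G.deleteEdges F).Reachable u v := by
  refine ⟨fun hmem hreach => ?_, fun hnreach => ?_⟩
  · obtain ⟨c, hc, hlen⟩ := exists_isCycle_length_filter_edges_eq_one huv hmem hreach
    exact hcyc v c hc hlen
  · by_contra hmem
    exact hnreach ((deleteEdges_adj ..).mpr ⟨huv, hmem⟩).reachable

end SimpleGraph

theorem multicut_iff_no_cycle_cut_once_general {V : Type*} [DecidableEq V]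
    (G : SimpleGraph V) (F : Finset (Sym2 V)) :
    (∃ f : V → V, ∀ u v, G.Adj u v → (s(u, v) ∈ F ↔ f u ≠ f v)) ↔
      (∀ (v : V) (p : G.Walk v v), p.IsCycle →
        (p.edges.filter (fun e => e ∈ F)).length ≠ 1) := by
  refine ⟨fun ⟨f, hf⟩ v p _ => p.length_filter_edges_ne_one hf rfl, fun hcyc => ?_⟩
  refine ⟨fun v => ((G.deleteEdges F).connectedComponentMk v).out, fun u v huv => ?_⟩
  rw [ne_eq, SimpleGraph.out_connectedComponentMk_eq_iff]
  exact SimpleGraph.mem_iff_not_reachable_deleteEdges hcyc huv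

/-- A subset `F` of the edges of `G` is a multicut (the cut of some partition of the
vertices) iff no cycle of `G` intersects `F` in exactly one edge. -/
theorem multicut_iff_no_cycle_cut_once {V : Type*} [Fintype V] [DecidableEq V]
    (G : SimpleGraph V) (F : Finset (Sym2 V)) (hF : ↑F ⊆ G.edgeSet) :
    (∃ f : V → V, ∀ u v, G.Adj u v → (s(u, v) ∈ F ↔ f u ≠ f v)) ↔
      (∀ (v : V) (p : G.Walk v v), p.IsCycle →
        (p.edges.filter (fun e => e ∈ F)).length ≠ 1) :=
  multicut_iff_no_cycle_cut_once_general G F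
end

section
/- The message passing update that sets edge min-marginals to zero is non-decreasing in the dual lower bound: replacing λ_{t,e} by λ_{t,e} − α·w_t with weights w_t ≥ 0 summing to 1 over t ∋ e, where α = c_e^λ, does not decrease LB(λ). -/
/-- Feasible multicut labelings of a triangle. -/
noncomputable def MCdelta : Finset (Fin 3 → ℝ) :=
  {![0,0,0], ![1,1,0], ![1,0,1], ![0,1,1], ![1,1,1]}

/-- The Lagrangian lower bound of the multicut problem. -/
noncomputable def LB {E T : Type*} [Fintype E] [Fintype T] [DecidableEq E]
    (c : E → ℝ) (τ : T → Fin 3 → E) (lam : T → Fin 3 → ℝ) : ℝ :=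
  ∑ e, min 0 (c e + ∑ t, ∑ i, if τ t i = e then lam t i else 0)
    + ∑ t, MCdelta.inf' ⟨![0,0,0], by simp [MCdelta]⟩ (fun z => -∑ i, lam t i * z i)

lemma mem_MCdelta_zero_one {z : Fin 3 → ℝ} (hz : z ∈ MCdelta) (i : Fin 3) :
    z i = 0 ∨ z i = 1 := by
  simp only [MCdelta, Finset.mem_insert, Finset.mem_singleton] at hz
  rcases hz with h|h|h|h|h <;> subst h <;> fin_cases i <;> simp

/-- The message passing update setting the min-marginal of edge `e0` to zero, which
distributes the reparametrized edge cost `α` among the triangles containing `e0` with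
nonnegative weights summing to one, does not decrease the lower bound. -/
theorem message_passing_nondecreasing {E T : Type*} [Fintype E] [Fintype T] [DecidableEq E]
    (c : E → ℝ) (τ : T → Fin 3 → E) (hτ : ∀ t, Function.Injective (τ t))
    (lam : T → Fin 3 → ℝ) (e0 : E) (w : T → ℝ)
    (hw0 : ∀ t, 0 ≤ w t)
    (hw1 : ∑ t, (if ∃ i, τ t i = e0 then w t else 0) = 1) :
    LB c τ lam ≤
      LB c τ (fun t i => lam t i -
        (if τ t i = e0 then
          (c e0 + ∑ t', ∑ i', if τ t' i' = e0 then lam t' i' else 0) * w t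
        else 0)) := by
  classical
  set α : ℝ := c e0 + ∑ t', ∑ i', if τ t' i' = e0 then lam t' i' else 0 with hα
  set lam' : T → Fin 3 → ℝ :=
    fun t i => lam t i - (if τ t i = e0 then α * w t else 0) with hlam'
  have hmin : min 0 α ≤ 0 := min_le_left _ _
  -- collapse of the correction sum over i for a fixed triangle
  have hcorr : ∀ t, (∑ i, if τ t i = e0 then α * w t else 0)
      = (if ∃ i, τ t i = e0 then α * w t else 0) := by
    intro t
    by_cases h : ∃ i, τ t i = e0
    · obtain ⟨i0, hi0⟩ := h
      rw [if_pos ⟨i0, hi0⟩, Finset.sum_eq_single i0]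
      · simp [hi0]
      · intro j _ hj
        have : τ t j ≠ e0 := fun hje => hj (hτ t (hje.trans hi0.symm))
        simp [this]
      · simp
    · rw [if_neg h]
      push_neg at h
      simp [h]
  have hwsum : (∑ t, (if ∃ i, τ t i = e0 then α * w t else 0)) = α := by
    have : (∑ t, (if ∃ i, τ t i = e0 then α * w t else 0))
        = α * ∑ t, (if ∃ i, τ t i = e0 then w t else 0) := by
      rw [Finset.mul_sum]
      apply Finset.sum_congr rfl
      intro t _
      by_cases h : ∃ i, τ t i = e0 <;> simp [h]
    rw [this, hw1, mul_one]
  -- pointwise identity for edge costs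
  have key : ∀ (e : E) (t : T) (i : Fin 3),
      (if τ t i = e then lam' t i else 0)
        = (if τ t i = e then lam t i else 0)
          - (if e = e0 then (if τ t i = e0 then α * w t else 0) else 0) := by
    intro e t i
    simp only [hlam']
    by_cases hi : τ t i = e
    · by_cases hie : τ t i = e0
      · have he : e = e0 := hi.symm.trans hie
        simp [hi, hie, he]
      · have he : ¬ e = e0 := fun h => hie (hi.trans h)
        simp [hi, hie, he]
    · by_cases he : e = e0
      · have hie : ¬ τ t i = e0 := fun h => hi (h.trans he.symm)
        simp [hi, hie]
      · simp [hi, he]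
  -- edge reparametrized costs
  have hX : ∀ e, (c e + ∑ t, ∑ i, if τ t i = e then lam' t i else 0)
      = (c e + ∑ t, ∑ i, if τ t i = e then lam t i else 0)
        - (if e = e0 then α else 0) := by
    intro e
    have hsum_t : ∀ t, (∑ i, if τ t i = e then lam' t i else 0)
        = (∑ i, if τ t i = e then lam t i else 0)
          - (if e = e0 then (if ∃ i, τ t i = e0 then α * w t else 0) else 0) := by
      intro t
      rw [Finset.sum_congr rfl (fun i _ => key e t i), Finset.sum_sub_distrib]
      congr 1
      by_cases he : e = e0
      · simp only [if_pos he]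
        exact hcorr t
      · simp [he]
    rw [Finset.sum_congr rfl (fun t _ => hsum_t t), Finset.sum_sub_distrib]
    by_cases he : e = e0
    · simp only [if_pos he]
      rw [hwsum]
      ring
    · simp [he]
  -- edge sum identity
  have hedge : (∑ e, min 0 (c e + ∑ t, ∑ i, if τ t i = e then lam' t i else 0))
      = (∑ e, min 0 (c e + ∑ t, ∑ i, if τ t i = e then lam t i else 0)) - min 0 α := by
    have hpt : ∀ e : E, min 0 (c e + ∑ t, ∑ i, if τ t i = e then lam' t i else 0)
        = min 0 (c e + ∑ t, ∑ i, if τ t i = e then lam t i else 0)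
          + (if e = e0 then -(min 0 α) else 0) := by
      intro e
      rw [hX e]
      by_cases he : e = e0
      · rw [if_pos he, if_pos he, he, ← hα]
        simp
      · simp [he]
    rw [Finset.sum_congr rfl (fun e _ => hpt e), Finset.sum_add_distrib,
      Finset.sum_ite_eq' Finset.univ e0 (fun _ => -(min 0 α)),
      if_pos (Finset.mem_univ e0)]
    ring
  -- per-triangle inequality
  have htri : ∀ t : T,
      MCdelta.inf' ⟨![0,0,0], by simp [MCdelta]⟩ (fun z => -∑ i, lam t i * z i)
        + (if ∃ i, τ t i = e0 then w t else 0) * min 0 α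
      ≤ MCdelta.inf' ⟨![0,0,0], by simp [MCdelta]⟩ (fun z => -∑ i, lam' t i * z i) := by
    intro t
    apply Finset.le_inf'
    intro z hz
    have h1 : MCdelta.inf' ⟨![0,0,0], by simp [MCdelta]⟩ (fun z => -∑ i, lam t i * z i)
        ≤ -∑ i, lam t i * z i := Finset.inf'_le _ hz
    have hsplit : (-∑ i, lam' t i * z i)
        = (-∑ i, lam t i * z i) + ∑ i, (if τ t i = e0 then α * w t else 0) * z i := by
      simp only [hlam', sub_mul]
      rw [Finset.sum_sub_distrib]
      ring
    have h2 : (if ∃ i, τ t i = e0 then w t else 0) * min 0 α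
        ≤ ∑ i, (if τ t i = e0 then α * w t else 0) * z i := by
      by_cases h : ∃ i, τ t i = e0
      · obtain ⟨i0, hi0⟩ := h
        rw [if_pos ⟨i0, hi0⟩]
        have hsum : (∑ i, (if τ t i = e0 then α * w t else 0) * z i)
            = α * w t * z i0 := by
          rw [Finset.sum_eq_single i0]
          · simp [hi0]
          · intro j _ hj
            have : τ t j ≠ e0 := fun hje => hj (hτ t (hje.trans hi0.symm))
            simp [this]
          · simp
        rw [hsum]
        rcases mem_MCdelta_zero_one hz i0 with h01 | h01
        · rw [h01, mul_zero]
          exact mul_nonpos_of_nonneg_of_nonpos (hw0 t) hmin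
        · rw [h01, mul_one]
          calc w t * min 0 α ≤ w t * α := mul_le_mul_of_nonneg_left (min_le_right _ _) (hw0 t)
            _ = α * w t := mul_comm _ _
      · rw [if_neg h]
        push_neg at h
        simp [h]
    rw [hsplit]
    linarith
  -- combine
  have hwmin : (∑ t, (if ∃ i, τ t i = e0 then w t else 0) * min 0 α) = min 0 α := by
    rw [← Finset.sum_mul, hw1, one_mul]
  unfold LB
  rw [hedge]
  have hs := Finset.sum_le_sum (fun t (_ : t ∈ Finset.univ) => htri t)
  rw [Finset.sum_add_distrib, hwmin] at hs
  linarith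
end

section
/- Triangulating a cycle preserves cycle constraints: if y ∈ {0,1}^E satisfies the triangle constraints (restriction to every triangle of a triangulation of cycle C lies in MC_Δ, using chord variables), then y restricted to C satisfies all cycle inequalities for C. -/
lemma tri_elim {a b c : ℕ}
    (h : (a, b, c) ∈
      ({(0,0,0), (1,1,0), (1,0,1), (0,1,1), (1,1,1)} : Set (ℕ × ℕ × ℕ))) :
    (a=0∧b=0∧c=0)∨(a=1∧b=1∧c=0)∨(a=1∧b=0∧c=1)∨(a=0∧b=1∧c=1)∨(a=1∧b=1∧c=1) := by
  simpa [Prod.ext_iff] using h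

/-- Triangulating a cycle preserves cycle constraints: if the cycle edge labels `y` and
chord labels `z` (with `z 1 = y 0` and `z (n-1) = y (n-1)`) satisfy all triangle
constraints (each triangle labeling lies in `MC_Δ`), then `y` satisfies all cycle
inequalities of the cycle. -/
theorem triangulation_preserves_cycle_constraints (n : ℕ) (hn : 3 ≤ n)
    (y z : ℕ → ℕ)
    (hy : ∀ i, y i = 0 ∨ y i = 1) (hz : ∀ i, z i = 0 ∨ z i = 1)
    (hz1 : z 1 = y 0) (hzn : z (n - 1) = y (n - 1))
    (htri : ∀ i, 1 ≤ i → i ≤ n - 2 →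
      (z i, y i, z (i + 1)) ∈
        ({(0,0,0), (1,1,0), (1,0,1), (0,1,1), (1,1,1)} : Set (ℕ × ℕ × ℕ))) :
    ∀ j ∈ Finset.range n, y j ≤ ∑ i ∈ (Finset.range n).erase j, y i := by
  intro j hj
  simp only [Finset.mem_range] at hj
  rcases hy j with h0 | h1
  · simp [h0]
  by_contra hle
  push_neg at hle
  have hs0 : ∑ i ∈ (Finset.range n).erase j, y i = 0 := by omega
  have hzero : ∀ i, i < n → i ≠ j → y i = 0 := by
    intro i hin hij
    exact Finset.sum_eq_zero_iff.mp hs0 i (by simp [Finset.mem_erase, hij, hin])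
  rcases Nat.eq_zero_or_pos j with hj0 | hjpos
  · -- j = 0 : chords all become 1, contradicting z (n-1) = y (n-1) = 0
    subst hj0
    have F : ∀ k, 1 ≤ k → k ≤ n - 1 → z k = 1 := by
      intro k hk1
      induction k, hk1 using Nat.le_induction with
      | base => intro _; exact hz1.trans h1
      | succ k hk ih =>
        intro hkn
        have hyk : y k = 0 := hzero k (by omega) (by omega)
        have hzk : z k = 1 := ih (by omega)
        have := tri_elim (htri k hk (by omega))
        omega
    have hF := F (n - 1) (by omega) le_rfl
    have hy' : y (n - 1) = 0 := hzero (n - 1) (by omega) (by omega)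
    omega
  · -- j ≥ 1 : chords z k = 0 for k ≤ j (forward propagation)
    have F : ∀ k, 1 ≤ k → k ≤ j → z k = 0 := by
      intro k hk1
      induction k, hk1 using Nat.le_induction with
      | base =>
        intro _
        have hy0 : y 0 = 0 := hzero 0 (by omega) (by omega)
        exact hz1.trans hy0
      | succ k hk ih =>
        intro hkj
        have hyk : y k = 0 := hzero k (by omega) (by omega)
        have hzk : z k = 0 := ih (by omega)
        have := tri_elim (htri k hk (by omega))
        omega
    rcases Nat.lt_or_ge j (n - 1) with hjlt | hjge
    · -- backward propagation: z (n-1-d) = 0 down to z (j+1)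
      have B : ∀ d, d ≤ n - 2 - j → z (n - 1 - d) = 0 := by
        intro d
        induction d with
        | zero =>
          intro _
          have hy' : y (n - 1) = 0 := hzero (n - 1) (by omega) (by omega)
          simpa [hy'] using hzn
        | succ d ih =>
          intro hd
          have hk : n - 1 - (d + 1) + 1 = n - 1 - d := by omega
          have h1' : 1 ≤ n - 1 - (d + 1) := by omega
          have hyk : y (n - 1 - (d + 1)) = 0 := hzero _ (by omega) (by omega)
          have hz2 : z (n - 1 - (d + 1) + 1) = 0 := by rw [hk]; exact ih (by omega)
          have := tri_elim (htri (n - 1 - (d + 1)) h1' (by omega))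
          omega
      have hzj : z j = 0 := F j (by omega) le_rfl
      have hB := B (n - 2 - j) le_rfl
      have hrw : n - 1 - (n - 2 - j) = j + 1 := by omega
      rw [hrw] at hB
      have := tri_elim (htri j (by omega) (by omega))
      omega
    · -- j = n - 1
      have hzj : z (n - 1) = 0 := F (n - 1) (by omega) (by omega)
      have : j = n - 1 := by omega
      subst this
      omega
end
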